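/- arXiv:math/0703528 — 2 statements merged into one kernel-verified Lean document; each statement's English description precedes it below -/
import Mathlib

section
/- (Jantzen filtration sum formula over a DVR.) Let A be a discrete valuation ring with uniformizer t, residue field k = A/(t), and valuation ν_t. Let M and N be free A-modules of the same finite rank n and let c : M → N be an A-linear map that becomes an isomorphism after tensoring with the fraction field. Define M^{(j)} = {v ∈ M : c(v) ∈ t^j N} and let M̄^{(j)} denote the image of M^{(j)} in M̄ = M/tM. Then ∑_{j≥1} dim_k M̄^{(j)} = ν_t(det c). -/
/-!
By Smith normal form, after normalising the elementary divisors to powers of `t`, there are bases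
`(b i)` of `M` and `(b' i)` of `N` with `c (b i) = t ^ (e i) • b' i`, and `ν_t (det c) = ∑ i, e i`.
In these coordinates `M^{(J)}` is cut out by `t ^ J ∣ t ^ (e i) * xᵢ`, so its reduction is spanned
by the (linearly independent) reductions of the `b i` with `J ≤ e i`. Hence the `j`-th term of
the sum counts the `i` with `j < e i`, and summing over `j` gives `∑ i, e i`.
-/

open Module IsLocalRing Finset Submodule
open scoped ENNReal

theorem LinearMap.apply_mem_of_forall_mem {A ι κ : Type*} [CommRing A] [Fintype ι]
    (f : (ι → A) →ₗ[A] (κ → A)) {I : Ideal A} {u : ι → A} (hu : ∀ i, u i ∈ I) (k : κ) :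
    f u k ∈ I := by
  classical
  rw [f.pi_apply_eq_sum_univ u, Finset.sum_apply]
  exact Ideal.sum_mem _ fun i _ => I.mul_mem_right _ (hu i)

theorem Module.Basis.forall_repr_mem_iff {A ι κ : Type*} [CommRing A] [Fintype ι] [Fintype κ]
    (b : Basis κ A (ι → A)) (I : Ideal A) (u : ι → A) :
    (∀ k, b.repr u k ∈ I) ↔ ∀ i, u i ∈ I := by
  refine ⟨fun h i => ?_, fun h k => ?_⟩
  · have := b.equivFun.symm.toLinearMap.apply_mem_of_forall_mem (u := b.equivFun u) h i
    rwa [LinearEquiv.coe_coe, LinearEquiv.symm_apply_apply] at this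
  · simpa using b.equivFun.toLinearMap.apply_mem_of_forall_mem h k

theorem dvd_of_pow_dvd_pow_mul {R : Type*} [CommMonoidWithZero R] [IsCancelMulZero R] {t x : R}
    (ht : t ≠ 0) {m n : ℕ} (hmn : m < n) (h : t ^ n ∣ t ^ m * x) : t ∣ x := by
  have : t ^ m * t ∣ t ^ m * x := (pow_succ t m ▸ pow_dvd_pow t hmn).trans h
  exact (mul_dvd_mul_iff_left (pow_ne_zero m ht)).mp this

theorem tsum_card_filter_succ_le_eq_sum {η : Type*} [Fintype η] (e : η → ℕ) :
    ∑' j : ℕ, ((#{i | j + 1 ≤ e i} : ℕ) : ℝ≥0∞) = ((∑ i, e i : ℕ) : ℝ≥0∞) := by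
  simp_rw [card_filter, Nat.cast_sum]
  rw [Summable.tsum_finsetSum fun _ _ => ENNReal.summable]
  refine sum_congr rfl fun i _ => ?_
  rw [tsum_eq_sum (s := range (e i)) fun j hj => by simp_all]
  simp [filter_true_of_mem fun _ => mem_range.mp]

section DiagonalForm

variable {A M N η : Type*} [CommRing A] [AddCommGroup M] [Module A M] [AddCommGroup N]
  [Module A N]

theorem Module.Basis.repr_map_of_apply_eq_smul (c : M →ₗ[A] N) (b : Basis η A M)
    (b' : Basis η A N) (a : η → A) (hc : ∀ i, c (b i) = a i • b' i) (v : M) (i : η) :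
    b'.repr (c v) i = a i * b.repr v i := by
  classical
  have key : b'.coord i ∘ₗ c = a i • b.coord i := b.ext fun j => by
    rcases eq_or_ne i j with rfl | hne <;> simp [*]
  simpa using LinearMap.congr_fun key v

theorem LinearMap.associated_det_prod_of_apply_eq_smul [Fintype η] [DecidableEq η]
    (c : M →ₗ[A] M) (b b' : Basis η A M) (a : η → A) (hc : ∀ i, c (b i) = a i • b' i) :
    Associated (LinearMap.det c) (∏ i, a i) := by
  have hdiag : LinearMap.toMatrix b b' c = Matrix.diagonal a := by
    ext j i
    rw [LinearMap.toMatrix_apply, b.repr_map_of_apply_eq_smul c b' a hc, b.repr_self]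
    simp [Matrix.diagonal_apply, Finsupp.single_apply, eq_comm]
  have hcomp : LinearMap.toMatrix b b' c = LinearMap.toMatrix b' b' c * b'.toMatrix b := by
    rw [← LinearMap.toMatrix_id_eq_basis_toMatrix, ← LinearMap.toMatrix_comp, LinearMap.comp_id]
  have hdet := congrArg Matrix.det hcomp
  rw [hdiag, Matrix.det_diagonal, Matrix.det_mul, LinearMap.det_toMatrix, ← Basis.det_apply]
    at hdet
  rw [hdet]
  exact associated_mul_unit_right _ _ (b'.isUnit_det b)

theorem LinearMap.injective_of_det_ne_zero {ι : Type*} [NoZeroDivisors A] [Fintype ι]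
    [DecidableEq ι] (c : (ι → A) →ₗ[A] (ι → A)) (hc : LinearMap.det c ≠ 0) :
    Function.Injective c := by
  rw [← LinearMap.det_toMatrix'] at hc
  rw [← funext c.toMatrix'_mulVec]
  exact Matrix.mulVec_injective_of_det_ne_zero hc

theorem LinearMap.exists_basis_apply_eq_pow_smul [IsDomain A] [IsDiscreteValuationRing A]
    [Finite η] (b : Basis η A M) {c : M →ₗ[A] M} (hc : Function.Injective c) {t : A}
    (ht : Irreducible t) :
    ∃ (b₁ b₂ : Basis η A M) (e : η → ℕ), ∀ i, c (b₁ i) = t ^ e i • b₂ i := by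
  obtain ⟨b', a, ab', hab'⟩ :=
    Submodule.exists_smith_normal_form_of_rank_eq b (LinearMap.finrank_range_of_inj hc)
  have ha : ∀ i, a i ≠ 0 := fun i h => ab'.ne_zero i (by ext1; simp [hab', h])
  choose e u hu using fun i => IsDiscreteValuationRing.eq_unit_mul_pow_irreducible (ha i) ht
  refine ⟨ab'.map (LinearEquiv.ofInjective c hc).symm, b'.unitsSMul u, e, fun i => ?_⟩
  have hab'_pre : c ((LinearEquiv.ofInjective c hc).symm (ab' i)) = ab' i :=
    congrArg Subtype.val ((LinearEquiv.ofInjective c hc).apply_symm_apply (ab' i))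
  rw [Basis.map_apply, hab'_pre, hab', Basis.unitsSMul_apply, hu, Units.smul_def, smul_smul,
    mul_comm]

end DiagonalForm

section Reduction

variable {A ι η : Type*} [CommRing A] [IsLocalRing A] [Fintype η]

theorem IsLocalRing.residue_sum_smul (g : η → A) (v : η → ι → A) :
    (fun k => residue A ((∑ i, g i • v i) k)) =
      ∑ i, residue A (g i) • fun k => residue A (v i k) := by
  ext k
  simp [Finset.sum_apply]

theorem Module.Basis.linearIndependent_residue [Fintype ι] (b : Basis η A (ι → A)) :
    LinearIndependent (ResidueField A) fun i k => residue A (b i k) := by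
  rw [Fintype.linearIndependent_iff]
  intro l hl i
  choose g hg using fun i => residue_surjective (l i)
  have h : (fun k => residue A ((∑ i, g i • b i) k)) = 0 := by
    rw [residue_sum_smul]
    simpa only [hg] using hl
  have := (b.forall_repr_mem_iff (maximalIdeal A) _).mpr
    (fun k => (residue_eq_zero_iff _).mp (congrFun h k)) i
  rwa [b.repr_sum_self, ← residue_eq_zero_iff, hg] at this

end Reduction

section Filtration

variable {A : Type*} [CommRing A] [IsDomain A] [IsDiscreteValuationRing A] {t : A}

theorem IsDiscreteValuationRing.residue_eq_zero_iff_dvd (ht : Irreducible t) {x : A} :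
    residue A x = 0 ↔ t ∣ x := by
  rw [residue_eq_zero_iff, (irreducible_iff_uniformizer t).mp ht, Ideal.mem_span_singleton]

variable {ι κ η : Type*} [Fintype κ] [Fintype η] {c : (ι → A) →ₗ[A] (κ → A)}
  {b : Basis η A (ι → A)} {b' : Basis η A (κ → A)} {e : η → ℕ}

theorem span_residue_image_eq_of_apply_eq_pow_smul (ht : Irreducible t)
    (hc : ∀ i, c (b i) = t ^ e i • b' i) (J : ℕ) :
    span (ResidueField A) ((fun v k => residue A (v k)) '' {v | ∀ k, t ^ J ∣ c v k}) =
      span (ResidueField A) ((fun i k => residue A (b i k)) '' {i | J ≤ e i}) := by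
  refine le_antisymm (span_le.mpr ?_) (span_mono ?_)
  · rintro _ ⟨v, hv, rfl⟩
    have hrepr : ∀ i, t ^ J ∣ t ^ e i * b.repr v i := fun i => by
      rw [← b.repr_map_of_apply_eq_smul c b' _ hc, ← Ideal.mem_span_singleton]
      exact (b'.forall_repr_mem_iff _ _).mpr (fun k => Ideal.mem_span_singleton.mpr (hv k)) i
    rw [SetLike.mem_coe, ← b.sum_repr v]
    dsimp only
    rw [residue_sum_smul]
    refine sum_mem fun i _ => ?_
    by_cases hi : J ≤ e i
    · exact smul_mem _ _ (subset_span ⟨i, hi, rfl⟩)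
    · rw [(IsDiscreteValuationRing.residue_eq_zero_iff_dvd ht).mpr
        (dvd_of_pow_dvd_pow_mul ht.ne_zero (not_le.mp hi) (hrepr i)), zero_smul]
      exact zero_mem _
  · rintro _ ⟨i, hi, rfl⟩
    refine ⟨b i, fun k => ?_, rfl⟩
    rw [hc, Pi.smul_apply, smul_eq_mul]
    exact (pow_dvd_pow t hi).mul_right _

theorem finrank_span_residue_image_of_apply_eq_pow_smul [Fintype ι] (ht : Irreducible t)
    (hc : ∀ i, c (b i) = t ^ e i • b' i) (J : ℕ) :
    finrank (ResidueField A)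
      (span (ResidueField A) ((fun v k => residue A (v k)) '' {v | ∀ k, t ^ J ∣ c v k})) =
      #{i | J ≤ e i} := by
  rw [span_residue_image_eq_of_apply_eq_pow_smul ht hc, Set.image_eq_range]
  exact (finrank_span_eq_card (b.linearIndependent_residue.comp _ Subtype.val_injective)).trans
    (by simp [Fintype.card_subtype])

end Filtration

theorem stmt8_general {A : Type*} [CommRing A] [IsDomain A] [IsDiscreteValuationRing A]
    (t : A) (ht : Irreducible t) (n : ℕ)
    (c : (Fin n → A) →ₗ[A] (Fin n → A))
    (d : ℕ) (hd : Associated (LinearMap.det c) (t ^ d)) :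
    ∑' j : ℕ,
      (Module.finrank (IsLocalRing.ResidueField A)
        (Submodule.span (IsLocalRing.ResidueField A)
          ((fun v i => IsLocalRing.residue A (v i)) ''
            {v : Fin n → A | ∀ i, t ^ (j + 1) ∣ c v i})) : ENNReal)
      = (d : ENNReal) := by
  have hdet : LinearMap.det c ≠ 0 := hd.ne_zero_iff.mpr (pow_ne_zero d ht.ne_zero)
  obtain ⟨b, b', e, hbb'⟩ := LinearMap.exists_basis_apply_eq_pow_smul (Pi.basisFun A (Fin n))
    (c.injective_of_det_ne_zero hdet) ht
  have hsum : ∑ i, e i = d := by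
    have h := (c.associated_det_prod_of_apply_eq_smul b b' _ hbb').symm.trans hd
    rw [prod_pow_eq_pow_sum] at h
    exact le_antisymm ((pow_dvd_pow_iff ht.ne_zero ht.not_isUnit).mp h.dvd)
      ((pow_dvd_pow_iff ht.ne_zero ht.not_isUnit).mp h.symm.dvd)
  simp_rw [finrank_span_residue_image_of_apply_eq_pow_smul ht hbb']
  rw [tsum_card_filter_succ_le_eq_sum, hsum]

/-- Jantzen filtration sum formula over a DVR.  Let `A` be a DVR
with uniformizer `t` and residue field `k`, `M = N = A^n` free of rank `n`, and
`c : M → N` an `A`-linear map which becomes an isomorphism over the fraction field.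
Let `M^{(j)} = {v ∈ M : c v ∈ t^j N}` and let `M̄^{(j)}` be the image of `M^{(j)}` in
`M/tM ≅ k^n` (reduction of coordinates mod the maximal ideal).  If
`ν_t(det c) = d` (i.e. `det c` is associated to `t^d`), then
`∑_{j ≥ 1} dim_k M̄^{(j)} = d`. -/
theorem stmt8 {A : Type*} [CommRing A] [IsDomain A] [IsDiscreteValuationRing A]
    (t : A) (ht : Irreducible t) (n : ℕ)
    (c : (Fin n → A) →ₗ[A] (Fin n → A))
    (hc : Function.Bijective (LinearMap.baseChange (FractionRing A) c))
    (d : ℕ) (hd : Associated (LinearMap.det c) (t ^ d)) :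
    ∑' j : ℕ,
      (Module.finrank (IsLocalRing.ResidueField A)
        (Submodule.span (IsLocalRing.ResidueField A)
          ((fun v i => IsLocalRing.residue A (v i)) ''
            {v : Fin n → A | ∀ i, t ^ (j + 1) ∣ c v i})) : ENNReal)
      = (d : ENNReal) :=
  stmt8_general t ht n c d hd
end

section
/- Let A be a discrete valuation ring with uniformizer t and residue field k, let M and N be free A-modules of rank n, and let c : M → N, c' : N → M be A-linear maps with c∘c' = t^ℓ·id_N and c'∘c = t^ℓ·id_M for some ℓ ≥ 0. Define the filtrations M^{(j)} = {v ∈ M : c(v) ∈ t^j N} and N^{(j)} = {w ∈ N : c'(w) ∈ t^j M}, with images M̄^{(j)}, N̄^{(j)} in M/tM, N/tN. Then for every j, dim_k M̄^{(j)} + dim_k N̄^{(ℓ+1−j)} = n. -/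
/-!
By Smith normal form there are bases `u` of `M` and `w` of `N` with `c uᵢ = αᵢ wᵢ`, and then
`c' wᵢ = βᵢ uᵢ` with `αᵢ βᵢ = t ^ ℓ`. If `t^j ∣ c v`, the `u`-coordinates of `v` at indices with
`t^j ∤ αᵢ` are non-units, so `M̄^{(j)}` is spanned by the reductions of the `uᵢ` with `t^j ∣ αᵢ`;
these are independent because a basis of `A^n` reduces to a basis of `k^n`. Hence
`M̄^{(j)}` has dimension `#{i | t^j ∣ αᵢ}` and `N̄^{(ℓ+1-j)}` has dimension
`#{i | t^{ℓ+1-j} ∣ βᵢ}`. Since `αᵢ βᵢ = t ^ ℓ`, the second condition says exactly `t^j ∤ αᵢ`,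
so the two index sets are complementary.
-/

open IsLocalRing Module

section Diagonal

variable {R M N ι : Type*} [CommRing R] [AddCommGroup M] [Module R M] [AddCommGroup N] [Module R N]

theorem exists_diagonal_bases_of_injective [IsDomain R] [IsPrincipalIdealRing R] [Finite ι]
    (b : Basis ι R N) (c : M →ₗ[R] N) (hc : Function.Injective c)
    (h : finrank R M = finrank R N) :
    ∃ (u : Basis ι R M) (w : Basis ι R N) (α : ι → R), ∀ i, c (u i) = α i • w i := by
  obtain ⟨w, α, v, hv⟩ := Submodule.exists_smith_normal_form_of_rank_eq (N := LinearMap.range c) b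
    ((LinearMap.finrank_range_of_inj hc).trans h)
  refine ⟨v.map (LinearEquiv.ofInjective c hc).symm, w, α, fun i => ?_⟩
  rw [Basis.map_apply, ← hv]
  exact congrArg Subtype.val ((LinearEquiv.ofInjective c hc).apply_symm_apply (v i))

theorem exists_diagonal_of_comp_eq_smul [IsDomain R] {u : Basis ι R M} {w : Basis ι R N}
    {c : M →ₗ[R] N} {α : ι → R} (hc : ∀ i, c (u i) = α i • w i) {c' : N →ₗ[R] M} {s : R}
    (hs : s ≠ 0) (h : c' ∘ₗ c = s • LinearMap.id) :
    ∃ β : ι → R, ∀ i, c' (w i) = β i • u i ∧ α i * β i = s := by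
  refine ⟨fun i => u.repr (c' (w i)) i, fun i => ?_⟩
  have key : α i • u.repr (c' (w i)) = Finsupp.single i s := by
    rw [← map_smul, ← map_smul, ← hc, ← LinearMap.comp_apply, h]
    simp
  have hαβ : α i * u.repr (c' (w i)) i = s := by simpa using DFunLike.congr_fun key i
  have hα : α i ≠ 0 := left_ne_zero_of_mul (hαβ ▸ hs)
  refine ⟨?_, hαβ⟩
  have hrepr : u.repr (c' (w i)) = Finsupp.single i (u.repr (c' (w i)) i) :=
    smul_right_injective _ hα (by simp only [key, Finsupp.smul_single, smul_eq_mul, hαβ])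
  rw [← u.repr_symm_single, ← hrepr, LinearEquiv.symm_apply_apply]

theorem repr_apply_eq_mul_repr_of_diagonal {u : Basis ι R M} {w : Basis ι R N}
    {c : M →ₗ[R] N} {α : ι → R} (hc : ∀ i, c (u i) = α i • w i) (v : M) (i : ι) :
    w.repr (c v) i = α i * u.repr v i := by
  have hcoord : w.coord i ∘ₗ c = α i • u.coord i :=
    u.ext fun k => by
      by_cases hki : k = i
      · subst hki; simp [hc]
      · simp [hc, Ne.symm hki]
  simpa using congr($hcoord v)

end Diagonal

theorem pow_dvd_iff_of_associated {R : Type*} [CommMonoidWithZero R] [IsCancelMulZero R]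
    {t x : R} (ht : Prime t) {s : ℕ} (hx : Associated x (t ^ s)) (j : ℕ) : t ^ j ∣ x ↔ j ≤ s :=
  hx.dvd_iff_dvd_right.trans (pow_dvd_pow_iff ht.ne_zero ht.not_isUnit)

theorem pow_dvd_iff_not_pow_dvd_of_mul_eq_pow {R : Type*} [CommMonoidWithZero R]
    [IsCancelMulZero R] {t α β : R} (ht : Prime t) {ℓ : ℕ} (h : α * β = t ^ ℓ) (j : ℕ) :
    t ^ (ℓ + 1 - j) ∣ β ↔ ¬ t ^ j ∣ α := by
  obtain ⟨s, hsℓ, hα⟩ := (dvd_prime_pow ht ℓ).mp (Dvd.intro β h)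
  have hβ : Associated β (t ^ (ℓ - s)) := by
    refine Associated.of_mul_left (a := α) (c := t ^ s) ?_ hα ?_
    · rw [h, ← pow_add, Nat.add_sub_cancel' hsℓ]
    · exact fun h0 => pow_ne_zero ℓ ht.ne_zero (by rw [← h, h0, zero_mul])
  rw [pow_dvd_iff_of_associated ht hβ, pow_dvd_iff_of_associated ht hα]
  omega

theorem dvd_basis_repr_of_forall_dvd {A ι κ : Type*} [CommRing A] (b : Basis κ A (ι → A))
    {d : A} {y : ι → A} (h : ∀ i, d ∣ y i) (k : κ) : d ∣ b.repr y k := by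
  choose z hz using h
  obtain rfl : y = d • z := funext hz
  simp

section Residue

variable {A ι : Type*} [CommRing A] [IsLocalRing A]

variable (ι A) in
noncomputable def residuePi : (ι → A) →ₛₗ[residue A] (ι → ResidueField A) where
  toFun v i := residue A (v i)
  map_add' _ _ := funext fun _ => map_add _ _ _
  map_smul' _ _ := funext fun _ => map_mul _ _ _

theorem linearIndependent_residuePi_basis [Fintype ι] [DecidableEq ι] (u : Basis ι A (ι → A)) :
    LinearIndependent (ResidueField A) (residuePi A ι ∘ u) := by
  have hdet : IsUnit ((Pi.basisFun A ι).toMatrix u).det := by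
    rw [← Basis.det_apply]; exact (Pi.basisFun A ι).isUnit_det u
  have hdet' : ((residue A).mapMatrix ((Pi.basisFun A ι).toMatrix u).transpose).det ≠ 0 := by
    rw [← RingHom.map_det, Matrix.det_transpose]
    exact (hdet.map _).ne_zero
  have hrows : residuePi A ι ∘ u =
      fun i => (residue A).mapMatrix ((Pi.basisFun A ι).toMatrix u).transpose i := by
    ext i k
    simp [residuePi, Basis.toMatrix_apply]
  rw [hrows]
  exact Matrix.linearIndependent_rows_of_det_ne_zero hdet'

theorem residue_eq_zero_of_dvd_mul {d x a : A} (h : d ∣ x * a) (ha : ¬ d ∣ a) :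
    residue A x = 0 := by
  rw [residue_eq_zero_iff, mem_maximalIdeal, mem_nonunits_iff]
  exact fun hx => ha ((hx.dvd_mul_left).mp h)

theorem span_residuePi_image_eq_of_diagonal [Fintype ι] {c : (ι → A) →ₗ[A] (ι → A)}
    {u w : Basis ι A (ι → A)} {α : ι → A} (hc : ∀ i, c (u i) = α i • w i) (d : A) :
    Submodule.span (ResidueField A) (residuePi A ι '' {v | ∀ i, d ∣ c v i}) =
      Submodule.span (ResidueField A) ((residuePi A ι ∘ u) '' {i | d ∣ α i}) := by
  refine le_antisymm (Submodule.span_le.mpr ?_) (Submodule.span_mono ?_)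
  · rintro _ ⟨v, hv, rfl⟩
    rw [← u.sum_repr v, map_sum]
    refine Submodule.sum_mem _ fun i _ => ?_
    rw [map_smulₛₗ]
    by_cases hi : d ∣ α i
    · exact Submodule.smul_mem _ _ (Submodule.subset_span ⟨i, hi, rfl⟩)
    · have hdvd : d ∣ u.repr v i * α i := by
        rw [mul_comm, ← repr_apply_eq_mul_repr_of_diagonal hc]
        exact dvd_basis_repr_of_forall_dvd w hv i
      rw [residue_eq_zero_of_dvd_mul hdvd hi, zero_smul]
      exact Submodule.zero_mem _
  · rintro _ ⟨i, hi, rfl⟩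
    exact ⟨u i, fun k => by simpa [hc] using hi.mul_right (w i k), rfl⟩

theorem finrank_span_residuePi_image_of_diagonal [Fintype ι] [DecidableEq ι]
    {c : (ι → A) →ₗ[A] (ι → A)} {u w : Basis ι A (ι → A)} {α : ι → A}
    (hc : ∀ i, c (u i) = α i • w i) (d : A) :
    finrank (ResidueField A) (Submodule.span (ResidueField A)
      (residuePi A ι '' {v | ∀ i, d ∣ c v i})) = Nat.card {i // d ∣ α i} := by
  classical
  rw [span_residuePi_image_eq_of_diagonal hc, Set.image_eq_range, Nat.card_eq_fintype_card]
  exact finrank_span_eq_card ((linearIndependent_residuePi_basis u).comp _ Subtype.val_injective)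

end Residue

theorem stmt9_general {A : Type*} [CommRing A] [IsDomain A] [IsDiscreteValuationRing A]
    (t : A) (ht : Irreducible t) (n ℓ : ℕ)
    (c c' : (Fin n → A) →ₗ[A] (Fin n → A))
    (hc'c : c' ∘ₗ c = (t ^ ℓ) • (LinearMap.id : (Fin n → A) →ₗ[A] (Fin n → A))) :
    ∀ j : ℕ,
      Module.finrank (IsLocalRing.ResidueField A)
        (Submodule.span (IsLocalRing.ResidueField A)
          ((fun v i => IsLocalRing.residue A (v i)) ''
            {v : Fin n → A | ∀ i, t ^ j ∣ c v i}))
      + Module.finrank (IsLocalRing.ResidueField A)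
        (Submodule.span (IsLocalRing.ResidueField A)
          ((fun w i => IsLocalRing.residue A (w i)) ''
            {w : Fin n → A | ∀ i, t ^ (ℓ + 1 - j) ∣ c' w i}))
      = n := by
  intro j
  have hs : t ^ ℓ ≠ 0 := pow_ne_zero ℓ ht.ne_zero
  have hc : Function.Injective c := Function.Injective.of_comp (f := c') <| by
    rw [← LinearMap.coe_comp, hc'c]
    exact smul_right_injective _ hs
  obtain ⟨u, w, α, hdiag⟩ := exists_diagonal_bases_of_injective (Pi.basisFun A (Fin n)) c hc rfl
  obtain ⟨β, hβ⟩ := exists_diagonal_of_comp_eq_smul hdiag hs hc'c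
  have hcompl (i : Fin n) : t ^ (ℓ + 1 - j) ∣ β i ↔ ¬ t ^ j ∣ α i :=
    pow_dvd_iff_not_pow_dvd_of_mul_eq_pow ht.prime (hβ i).2 j
  -- `residuePi A (Fin n)` unfolds to the coordinatewise reduction `fun v i => residue A (v i)`.
  calc _ = Nat.card {i // t ^ j ∣ α i} + Nat.card {i // ¬ t ^ j ∣ α i} :=
        congrArg₂ (· + ·) (finrank_span_residuePi_image_of_diagonal hdiag _)
          ((finrank_span_residuePi_image_of_diagonal (fun i => (hβ i).1) _).trans
            (Nat.card_congr (Equiv.subtypeEquivRight hcompl)))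
    _ = n := by
      classical
      rw [Nat.card_eq_fintype_card, Nat.card_eq_fintype_card, Fintype.card_subtype_compl,
        Nat.add_sub_of_le (Fintype.card_subtype_le _), Fintype.card_fin]

/-- Let `A` be a DVR with uniformizer `t` and residue field `k`,
`M = N = A^n`, and `c : M → N`, `c' : N → M` with `c ∘ c' = t^ℓ · id` and
`c' ∘ c = t^ℓ · id`.  With the Jantzen filtrations
`M^{(j)} = {v : c v ∈ t^j N}`, `N^{(j)} = {w : c' w ∈ t^j M}` and their images
`M̄^{(j)}`, `N̄^{(j)}` in `M/tM ≅ k^n`, `N/tN ≅ k^n`, one has for every `j`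
`dim_k M̄^{(j)} + dim_k N̄^{(ℓ+1-j)} = n`. -/
theorem stmt9 {A : Type*} [CommRing A] [IsDomain A] [IsDiscreteValuationRing A]
    (t : A) (ht : Irreducible t) (n ℓ : ℕ)
    (c c' : (Fin n → A) →ₗ[A] (Fin n → A))
    (hcc' : c ∘ₗ c' = (t ^ ℓ) • (LinearMap.id : (Fin n → A) →ₗ[A] (Fin n → A)))
    (hc'c : c' ∘ₗ c = (t ^ ℓ) • (LinearMap.id : (Fin n → A) →ₗ[A] (Fin n → A))) :
    ∀ j : ℕ,
      Module.finrank (IsLocalRing.ResidueField A)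
        (Submodule.span (IsLocalRing.ResidueField A)
          ((fun v i => IsLocalRing.residue A (v i)) ''
            {v : Fin n → A | ∀ i, t ^ j ∣ c v i}))
      + Module.finrank (IsLocalRing.ResidueField A)
        (Submodule.span (IsLocalRing.ResidueField A)
          ((fun w i => IsLocalRing.residue A (w i)) ''
            {w : Fin n → A | ∀ i, t ^ (ℓ + 1 - j) ∣ c' w i}))
      = n :=
  stmt9_general t ht n ℓ c c' hc'c
end
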